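/- Let E be a finite-dimensional real inner product space, and let φ : E → ℝ be differentiable, strictly convex, and supercoercive (φ(x)/‖x‖ → ∞ as ‖x‖ → ∞). Let V ⊆ E be a linear subspace and x₀, yᴾ ∈ E. Let x_EQ be the unique point of x₀ + V with ∇φ(x_EQ) − yᴾ ∈ V^⊥. Then x_EQ is the unique minimizer of x' ↦ D[x₀‖x'] over the equilibrium manifold {x' ∈ E : ∇φ(x') − yᴾ ∈ V^⊥}, and the minimum value equals D[x₀‖x_EQ]; i.e., the total entropy production during the relaxation from x₀ equals (Ω/T̃ times) the minimized divergence from x₀ to the equilibrium manifold. -/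

import Mathlib

open scoped RealInnerProductSpace

/-
The divergences from `x₀` to two points `xP`, `xEQ` of the equilibrium manifold differ by
`D[xEQ‖xP]` plus the pairing of `∇φ xEQ - ∇φ xP ∈ Vᗮ` with `x₀ - xEQ ∈ V` (three-point identity).
The pairing vanishes, and `D[xEQ‖xP] > 0` for `xP ≠ xEQ` by the strict first-order
characterization of strict convexity, obtained by restricting `φ` to the line through the two
points.
-/

theorem StrictConvexOn.comp_affineMap {𝕜 E F β : Type*} [Ring 𝕜] [PartialOrder 𝕜]
    [AddCommGroup E] [AddCommGroup F] [AddCommMonoid β] [PartialOrder β]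
    [Module 𝕜 E] [Module 𝕜 F] [SMul 𝕜 β] {f : F → β} {s : Set F}
    (hf : StrictConvexOn 𝕜 s f) (g : E →ᵃ[𝕜] F) (hg : Function.Injective g) :
    StrictConvexOn 𝕜 (g ⁻¹' s) (f ∘ g) :=
  ⟨hf.1.affine_preimage g, fun x hx y hy hxy a b ha hb hab => by
    simpa only [Function.comp_apply, Convex.combo_affine_apply hab] using
      hf.2 hx hy (hg.ne hxy) ha hb hab⟩

theorem StrictConvexOn.lt_sub_of_hasFDerivAt {E : Type*} [NormedAddCommGroup E]
    [NormedSpace ℝ E] {f : E → ℝ} {f' : E →L[ℝ] ℝ} {s : Set E} (hf : StrictConvexOn ℝ s f)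
    {a b : E} (ha : a ∈ s) (hb : b ∈ s) (hab : a ≠ b) (hf' : HasFDerivAt f f' a) :
    f' (b - a) < f b - f a := by
  let ℓ : ℝ →ᵃ[ℝ] E := AffineMap.lineMap a b
  have hline : StrictConvexOn ℝ (ℓ ⁻¹' s) (f ∘ ℓ) :=
    hf.comp_affineMap ℓ (AffineMap.lineMap_injective ℝ hab)
  have hderiv : HasDerivAt (f ∘ ℓ) (f' (b - a)) 0 :=
    HasFDerivAt.comp_hasDerivAt 0 (by simpa [ℓ] using hf') AffineMap.hasDerivAt_lineMap
  simpa [slope_def_field, ℓ] using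
    hline.lt_slope_of_hasDerivAt (by simpa [ℓ] using ha) (by simpa [ℓ] using hb) one_pos hderiv

section Bregman

variable {E : Type*} [NormedAddCommGroup E] [InnerProductSpace ℝ E] [CompleteSpace E]

noncomputable def bregmanDiv (φ : E → ℝ) (x x' : E) : ℝ :=
  φ x - φ x' - ⟪gradient φ x', x - x'⟫

theorem bregmanDiv_pos {φ : E → ℝ} {s : Set E} (hφ : StrictConvexOn ℝ s φ) {x x' : E}
    (hx : x ∈ s) (hx' : x' ∈ s) (hne : x ≠ x') (hd : DifferentiableAt ℝ φ x') :
    0 < bregmanDiv φ x x' := by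
  have htangent := hφ.lt_sub_of_hasFDerivAt hx' hx hne.symm hd.hasGradientAt.hasFDerivAt
  rw [InnerProductSpace.toDual_apply_apply] at htangent
  rw [bregmanDiv]
  linarith

theorem bregmanDiv_sub_bregmanDiv (φ : E → ℝ) (x y z : E) :
    bregmanDiv φ x z - bregmanDiv φ x y =
      bregmanDiv φ y z + ⟪gradient φ y - gradient φ z, x - y⟫ := by
  simp only [bregmanDiv, inner_sub_left, inner_sub_right]
  ring

end Bregman

theorem equilibrium_minimizes_divergence_on_equilibrium_manifold_general
    {E : Type*} [NormedAddCommGroup E] [InnerProductSpace ℝ E] [FiniteDimensional ℝ E]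
    (φ : E → ℝ) (hdiff : Differentiable ℝ φ)
    (hconv : StrictConvexOn ℝ Set.univ φ)
    (V : Submodule ℝ E) (x₀ yP xEQ : E)
    (hEQmem : xEQ - x₀ ∈ V) (hEQ : gradient φ xEQ - yP ∈ Vᗮ) :
    ∀ xP : E, gradient φ xP - yP ∈ Vᗮ → xP ≠ xEQ →
      φ x₀ - φ xEQ - ⟪gradient φ xEQ, x₀ - xEQ⟫ <
        φ x₀ - φ xP - ⟪gradient φ xP, x₀ - xP⟫ := by
  intro xP hP hne
  show bregmanDiv φ x₀ xEQ < bregmanDiv φ x₀ xP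
  have hgrad : gradient φ xEQ - gradient φ xP ∈ Vᗮ := by
    simpa using Vᗮ.sub_mem hEQ hP
  have horth : ⟪gradient φ xEQ - gradient φ xP, x₀ - xEQ⟫ = 0 :=
    (Submodule.mem_orthogonal' V _).mp hgrad _ (by simpa using V.neg_mem hEQmem)
  have hpos := bregmanDiv_pos hconv trivial trivial hne.symm (hdiff xP)
  linarith [bregmanDiv_sub_bregmanDiv φ x₀ xEQ xP]

/-- **The equilibrium state minimizes the divergence over the equilibrium manifold.**
Let `φ` be differentiable, strictly convex and supercoercive on a finite-dimensional real
inner product space, `V` a linear subspace, and `xEQ` the point of `x₀ + V` with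
`∇φ xEQ - yP ∈ Vᗮ`.  Then `xEQ` is the unique minimizer of `x' ↦ D[x₀‖x']` over the
equilibrium manifold `{x' | ∇φ x' - yP ∈ Vᗮ}`, and the minimum value is `D[x₀‖xEQ]`
(the total entropy production of the relaxation from `x₀`, up to the factor Ω/T̃). -/
theorem equilibrium_minimizes_divergence_on_equilibrium_manifold
    {E : Type*} [NormedAddCommGroup E] [InnerProductSpace ℝ E] [FiniteDimensional ℝ E]
    (φ : E → ℝ) (hdiff : Differentiable ℝ φ)
    (hconv : StrictConvexOn ℝ Set.univ φ)
    (hcoer : Filter.Tendsto (fun x => φ x / ‖x‖) (Filter.cocompact E) Filter.atTop)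
    (V : Submodule ℝ E) (x₀ yP xEQ : E)
    (hEQmem : xEQ - x₀ ∈ V) (hEQ : gradient φ xEQ - yP ∈ Vᗮ) :
    ∀ xP : E, gradient φ xP - yP ∈ Vᗮ → xP ≠ xEQ →
      φ x₀ - φ xEQ - ⟪gradient φ xEQ, x₀ - xEQ⟫ <
        φ x₀ - φ xP - ⟪gradient φ xP, x₀ - xP⟫ :=
  equilibrium_minimizes_divergence_on_equilibrium_manifold_general φ hdiff hconv V x₀ yP xEQ hEQmem
    hEQ
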